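/- arXiv:2004.07226 — 5 statements merged into one kernel-verified Lean document; each statement's English description precedes it below -/
import Mathlib

section
/- Let L ≥ 2 and let h(ν) = ∑_{l=−(L−1)}^{L−1} h_l e^{−2πi l ν} be a trigonometric polynomial of degree at most L−1 whose values h(ν) are real for all ν ∈ [0,1]. Let δ > 0, let K be an integer with K ≥ 2(1+δ)(L−1), let ν_0 ∈ [0,1], and set ν_k = ν_0 + k/K for k = 0,…,K. Then max_{ν∈[0,1]} |h(ν)| ≤ (1 + 1/δ) · max_{k=0,…,K} |h(ν_k)|. -/
/-!
With `n = L - 1`, `P = K - n` and `D_j(x) = ∑_{0 ≤ s < j} e^{-2πisx}`, the real kernel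
`V = |D_P|² - |D_n|²` has Fourier coefficient `P - n` at every `|l| ≤ n` and none outside
`(-P, P)`. As `P + n = K`, sampling on the grid `ν₀ + k/K` causes no aliasing, so
`(P - n) K h(ν) = ∑_k h(ν_k) V(ν - ν_k)`. Bounding `|V| ≤ |D_P|² + |D_n|²` and using the exact
grid sums `∑_k |D_j(y - k/K)|² = jK` gives `(K - 2n) |h(ν)| ≤ K max_k |h(ν_k)|`, and
`K / (K - 2n) ≤ 1 + 1/δ` is the hypothesis on `K`.
-/

open Complex Finset
open scoped ComplexConjugate

noncomputable section

def expFreq (l : ℤ) (x : ℝ) : ℂ :=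
  Complex.exp (-(2 * (Real.pi : ℂ) * Complex.I * (l : ℂ) * (x : ℂ)))

@[simp] lemma expFreq_zero_left (x : ℝ) : expFreq 0 x = 1 := by simp [expFreq]

lemma expFreq_add (l m : ℤ) (x : ℝ) : expFreq (l + m) x = expFreq l x * expFreq m x := by
  rw [expFreq, expFreq, expFreq, ← Complex.exp_add]; congr 1; push_cast; ring

lemma expFreq_apply_add (l : ℤ) (x y : ℝ) : expFreq l (x + y) = expFreq l x * expFreq l y := by
  rw [expFreq, expFreq, expFreq, ← Complex.exp_add]; congr 1; push_cast; ring

lemma expFreq_apply_sub (l : ℤ) (x y : ℝ) : expFreq l (x - y) = expFreq l x * expFreq (-l) y := by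
  rw [expFreq, expFreq, expFreq, ← Complex.exp_add]; congr 1; push_cast; ring

lemma conj_expFreq (l : ℤ) (x : ℝ) : conj (expFreq l x) = expFreq (-l) x := by
  rw [expFreq, expFreq, ← Complex.exp_conj]; congr 1
  simp only [map_neg, map_mul, conj_I, conj_ofReal, map_intCast, map_ofNat]; push_cast; ring

lemma sum_expFreq_grid (K : ℕ) (m : ℤ) :
    ∑ k ∈ range K, expFreq m (k / K) = if (K : ℤ) ∣ m then (K : ℂ) else 0 := by
  rcases Nat.eq_zero_or_pos K with rfl | hK
  · simp
  have hζ := Complex.isPrimitiveRoot_exp K hK.ne'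
  set z := Complex.exp (2 * Real.pi * I / K) ^ (-m) with hz
  have hpow (k : ℕ) : expFreq m (k / K) = z ^ k := by
    rw [expFreq, hz, ← Complex.exp_int_mul, ← Complex.exp_nat_mul]
    congr 1; push_cast; field_simp
  have hzK : z ^ K = 1 := by
    rw [hz, ← zpow_natCast, ← zpow_mul, mul_comm (-m), zpow_mul, zpow_natCast, hζ.pow_eq_one,
      one_zpow]
  simp_rw [hpow]
  split_ifs with hdvd
  · simp [z, (hζ.zpow_eq_one_iff_dvd (-m)).2 (dvd_neg.2 hdvd)]
  · have hz1 : z ≠ 1 := fun h => hdvd (dvd_neg.1 ((hζ.zpow_eq_one_iff_dvd _).1 h))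
    have hgeom := geom_sum_mul z K
    rw [hzK, sub_self] at hgeom
    exact (mul_eq_zero.1 hgeom).resolve_right (sub_ne_zero.2 hz1)

lemma sum_expFreq_shifted_grid {K : ℕ} {m : ℤ} (hm : |m| < K) (ν₀ : ℝ) :
    ∑ k ∈ range K, expFreq m (ν₀ + k / K) = if m = 0 then (K : ℂ) else 0 := by
  simp_rw [expFreq_apply_add, ← mul_sum, sum_expFreq_grid]
  by_cases h : m = 0
  · simp [h]
  · simp [h, mt (Int.eq_zero_of_abs_lt_dvd · hm) h]

def expSum (j : ℤ) (x : ℝ) : ℂ := ∑ s ∈ Ico 0 j, expFreq s x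

lemma normSq_expSum (j : ℤ) (x : ℝ) :
    (normSq (expSum j x) : ℂ) = ∑ s ∈ Ico 0 j, ∑ s' ∈ Ico 0 j, expFreq (s - s') x := by
  rw [← mul_conj, expSum, map_sum, sum_mul_sum]
  simp_rw [conj_expFreq, ← expFreq_add, sub_eq_add_neg]

lemma card_filter_add_mem_Ico {j l : ℤ} (hl : |l| ≤ j) :
    (#{s ∈ Ico 0 j | l + s ∈ Ico 0 j} : ℤ) = j - |l| := by
  have : {s ∈ Ico 0 j | l + s ∈ Ico 0 j} = Ico (max 0 (-l)) (min j (j - l)) := by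
    ext s; simp only [mem_filter, mem_Ico, max_le_iff, lt_min_iff]; omega
  rw [this, Int.card_Ico]
  rcases abs_cases l with ⟨h, _⟩ | ⟨h, _⟩ <;> rw [h] at hl ⊢ <;> omega

lemma sum_grid_expFreq_mul_normSq_expSum {K : ℕ} {j l : ℤ} (hl : |l| ≤ j) (hjK : j + |l| ≤ K)
    (ν₀ ν : ℝ) :
    ∑ k ∈ range K, expFreq l (ν₀ + k / K) * normSq (expSum j (ν - (ν₀ + k / K)))
      = K * ((j - |l| : ℤ) : ℂ) * expFreq l ν := by
  have hterm (t : ℤ) (x : ℝ) :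
      expFreq l x * expFreq t (ν - x) = expFreq t ν * expFreq (l - t) x := by
    rw [expFreq_apply_sub, sub_eq_add_neg l, expFreq_add]; ring
  have hunaliased {s s' : ℤ} (hs : s ∈ Ico 0 j) (hs' : s' ∈ Ico 0 j) : |l - (s - s')| < K := by
    rw [mem_Ico] at hs hs'
    rw [abs_lt]
    rcases abs_cases l with ⟨h, _⟩ | ⟨h, _⟩ <;> rw [h] at hjK <;> constructor <;> omega
  calc ∑ k ∈ range K, expFreq l (ν₀ + k / K) * normSq (expSum j (ν - (ν₀ + k / K)))
      = ∑ s ∈ Ico 0 j, ∑ s' ∈ Ico 0 j,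
          expFreq (s - s') ν * ∑ k ∈ range K, expFreq (l - (s - s')) (ν₀ + k / K) := by
        simp_rw [normSq_expSum, mul_sum, hterm]
        rw [sum_comm]; refine sum_congr rfl fun s _ => ?_; rw [sum_comm]
    _ = ∑ s' ∈ Ico 0 j, ∑ s ∈ Ico 0 j, if s = l + s' then K * expFreq l ν else 0 := by
        rw [sum_comm]
        refine sum_congr rfl fun s' hs' => sum_congr rfl fun s hs => ?_
        rw [sum_expFreq_shifted_grid (hunaliased hs hs')]
        by_cases h : s = l + s'
        · subst h; simp [mul_comm]
        · rw [if_neg (by omega), if_neg h, mul_zero]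
    _ = K * ((j - |l| : ℤ) : ℂ) * expFreq l ν := by
        simp_rw [sum_ite_eq']
        rw [sum_ite, sum_const_zero, add_zero, sum_const, nsmul_eq_mul, ← Int.cast_natCast,
          card_filter_add_mem_Ico hl]
        ring

def trigPoly (c : ℤ → ℂ) (n : ℤ) (x : ℝ) : ℂ := ∑ l ∈ Icc (-n) n, c l * expFreq l x

def vallePoussin (n P : ℤ) (y : ℝ) : ℝ := normSq (expSum P y) - normSq (expSum n y)

lemma sum_grid_trigPoly_mul_vallePoussin (c : ℤ → ℂ) {n P : ℤ} {K : ℕ} (hnP : n ≤ P)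
    (hPK : P + n ≤ K) (ν₀ ν : ℝ) :
    ∑ k ∈ range K, trigPoly c n (ν₀ + k / K) * vallePoussin n P (ν - (ν₀ + k / K))
      = K * ((P - n : ℤ) : ℂ) * trigPoly c n ν := by
  simp_rw [trigPoly, sum_mul, mul_sum]
  rw [sum_comm]
  refine sum_congr rfl fun l hl => ?_
  have hln : |l| ≤ n := abs_le.2 (mem_Icc.1 hl)
  simp only [vallePoussin, ofReal_sub, mul_sub, sum_sub_distrib, mul_assoc, ← mul_sum]
  rw [sum_grid_expFreq_mul_normSq_expSum (hln.trans hnP) (by linarith),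
    sum_grid_expFreq_mul_normSq_expSum hln (by linarith)]
  push_cast; ring

lemma sum_grid_normSq_expSum {K : ℕ} {j : ℤ} (hj : 0 ≤ j) (hjK : j ≤ K) (ν₀ ν : ℝ) :
    ∑ k ∈ range K, normSq (expSum j (ν - (ν₀ + k / K))) = K * j := by
  have h := sum_grid_expFreq_mul_normSq_expSum (l := 0) (by simpa) (by simpa) ν₀ ν
  simp only [expFreq_zero_left, one_mul, abs_zero, sub_zero, mul_one] at h
  exact_mod_cast h

lemma abs_vallePoussin_le (n P : ℤ) (y : ℝ) :
    |vallePoussin n P y| ≤ normSq (expSum P y) + normSq (expSum n y) := by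
  refine (abs_sub _ _).trans_eq ?_
  rw [abs_of_nonneg (normSq_nonneg _), abs_of_nonneg (normSq_nonneg _)]

theorem norm_trigPoly_le_of_grid (c : ℤ → ℂ) {n : ℤ} {K : ℕ} (hn : 0 ≤ n) (hnK : 2 * n < K)
    {M : ℝ} {ν₀ : ℝ} (hM : ∀ k < K, ‖trigPoly c n (ν₀ + k / K)‖ ≤ M) (ν : ℝ) :
    ‖trigPoly c n ν‖ ≤ K / (K - 2 * n) * M := by
  set P : ℤ := K - n
  have hK : (0 : ℝ) < K := by exact_mod_cast (by omega : 0 < K)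
  have hgap : (0 : ℝ) < K - 2 * n := by
    rw [sub_pos]; exact_mod_cast hnK
  have hrepr := sum_grid_trigPoly_mul_vallePoussin c (by omega : n ≤ P) (by omega : P + n ≤ K) ν₀ ν
  have key : K * ((K - 2 * n) * ‖trigPoly c n ν‖) ≤ K * (K * M) := calc
    K * ((K - 2 * n) * ‖trigPoly c n ν‖)
        = ‖∑ k ∈ range K, trigPoly c n (ν₀ + k / K) * vallePoussin n P (ν - (ν₀ + k / K))‖ := by
      rw [hrepr, norm_mul, norm_mul, Complex.norm_natCast, Complex.norm_intCast, abs_of_pos]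
      · push_cast [P]; ring
      · push_cast [P]; linarith
    _ ≤ ∑ k ∈ range K, M * (normSq (expSum P (ν - (ν₀ + k / K)))
          + normSq (expSum n (ν - (ν₀ + k / K)))) := by
      refine norm_sum_le_of_le _ fun k hk => ?_
      rw [norm_mul, Complex.norm_real, Real.norm_eq_abs]
      have hMk := hM k (mem_range.1 hk)
      exact mul_le_mul hMk (abs_vallePoussin_le ..) (abs_nonneg _) ((norm_nonneg _).trans hMk)
    _ = K * (K * M) := by
      rw [← mul_sum, sum_add_distrib, sum_grid_normSq_expSum (by omega) (by omega),
        sum_grid_normSq_expSum hn (by omega)]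
      push_cast [P]; ring
  rw [div_mul_eq_mul_div, le_div_iff₀ hgap]
  linarith [le_of_mul_le_mul_left key hK]

end

theorem zygmund_grid_bound_general (L : ℕ) (hL : 2 ≤ L) (c : ℤ → ℂ) (h : ℝ → ℂ)
    (hdef : ∀ ν : ℝ, h ν =
      ∑ l ∈ Finset.Icc (-(L : ℤ) + 1) ((L : ℤ) - 1),
        c l * Complex.exp (-(2 * (Real.pi : ℂ) * Complex.I * (l : ℂ) * (ν : ℂ))))
    (δ : ℝ) (hδ : 0 < δ) (K : ℕ) (hK : 2 * (1 + δ) * ((L : ℝ) - 1) ≤ (K : ℝ))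
    (ν₀ : ℝ) :
    ∀ ν ∈ Set.Icc (0 : ℝ) 1,
      ‖h ν‖ ≤ (1 + 1 / δ) *
        (Finset.range (K + 1)).sup' ⟨0, Finset.mem_range.mpr (Nat.succ_pos K)⟩
          (fun k => ‖h (ν₀ + (k : ℝ) / (K : ℝ))‖) := by
  intro ν _
  set n : ℤ := L - 1
  have hh : h = trigPoly c n :=
    funext fun x => by rw [hdef, trigPoly, neg_sub', sub_neg_eq_add]; rfl
  have hnR : (n : ℝ) = L - 1 := by push_cast [n]; ring
  have hn : (1 : ℝ) ≤ n := by exact_mod_cast (by omega : 1 ≤ n)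
  have hnK : 2 * n < K := by
    have : (2 : ℝ) * n < K := by nlinarith
    exact_mod_cast this
  set M := (Finset.range (K + 1)).sup' ⟨0, Finset.mem_range.mpr (Nat.succ_pos K)⟩
    (fun k => ‖h (ν₀ + (k : ℝ) / (K : ℝ))‖)
  have hM (k : ℕ) (hk : k ≤ K) : ‖h (ν₀ + k / K)‖ ≤ M :=
    le_sup' (fun k : ℕ => ‖h (ν₀ + k / K)‖) (mem_range.2 (Nat.lt_succ_of_le hk))
  have hgap : (0 : ℝ) < K - 2 * n := by rw [sub_pos]; exact_mod_cast hnK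
  calc ‖h ν‖ ≤ K / (K - 2 * n) * M :=
        hh ▸ norm_trigPoly_le_of_grid c (by omega) hnK (fun k hk => hh ▸ hM k hk.le) ν
    _ ≤ (1 + 1 / δ) * M := by
        gcongr
        · exact (norm_nonneg _).trans (hM 0 (Nat.zero_le K))
        · rw [div_le_iff₀ hgap]
          field_simp
          nlinarith

/-- Zygmund's grid inequality for real-valued trigonometric
polynomials of degree at most `L-1`. -/
theorem zygmund_grid_bound (L : ℕ) (hL : 2 ≤ L) (c : ℤ → ℂ) (h : ℝ → ℂ)
    (hdef : ∀ ν : ℝ, h ν =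
      ∑ l ∈ Finset.Icc (-(L : ℤ) + 1) ((L : ℤ) - 1),
        c l * Complex.exp (-(2 * (Real.pi : ℂ) * Complex.I * (l : ℂ) * (ν : ℂ))))
    (hreal : ∀ ν : ℝ, (h ν).im = 0)
    (δ : ℝ) (hδ : 0 < δ) (K : ℕ) (hK : 2 * (1 + δ) * ((L : ℝ) - 1) ≤ (K : ℝ))
    (ν₀ : ℝ) (hν₀ : ν₀ ∈ Set.Icc (0 : ℝ) 1) :
    ∀ ν ∈ Set.Icc (0 : ℝ) 1,
      ‖h ν‖ ≤ (1 + 1 / δ) *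
        (Finset.range (K + 1)).sup' ⟨0, Finset.mem_range.mpr (Nat.succ_pos K)⟩
          (fun k => ‖h (ν₀ + (k : ℝ) / (K : ℝ))‖) :=
  zygmund_grid_bound_general L hL c h hdef δ hδ K hK ν₀
end

section
/- Let γ_0 > 0 and C > 0. There exists a constant κ > 0, depending only on γ_0 and C, with the following property: for every sequence r : ℤ → ℂ with ∑_{n∈ℤ}(1+|n|)^{γ_0}|r(n)| ≤ C, setting S(ν) = ∑_{l∈ℤ} r(l) e^{−2πi l ν}, one has for all integers L ≥ 1, N ≥ 1 and every ν ∈ [0,1]: |∑_{l=−(L−1)}^{L−1} (1 − |l|/N) r(l) e^{−2πi l ν} − S(ν)| ≤ κ ( 1/L^{γ_0} + L^{(1−γ_0)_+}/N ), where (x)_+ = max(x, 0). -/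
/-!
Write `w(l) = (1 + |l|)^γ` and `m = max (1 - γ) 0`. The bias is `∑ₗ (W(l) - 1) r(l) e^{-2πilν}`, where
`W(l) = (1 - |l|/N) 1_{|l|<L}` is the lag window, so it suffices to bound `|W(l) - 1|` by
`(L^{-γ} + L^m/N) w(l)` for every `l`: outside the window `1 ≤ w(l)/L^γ`, and inside it
`|l| ≤ 1 + |l| ≤ (1 + |l|)^{m+γ} ≤ L^m w(l)`. Summing against `|r|` then gives the bound with `κ = C`.
-/

open Complex

lemma summable_norm_of_summable_one_add_abs_rpow_mul_norm {γ : ℝ} (hγ : 0 ≤ γ) {r : ℤ → ℂ}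
    (hr : Summable fun n : ℤ => (1 + |(n : ℝ)|) ^ γ * ‖r n‖) : Summable fun n => ‖r n‖ :=
  hr.of_nonneg_of_le (fun _ => norm_nonneg _) fun n =>
    le_mul_of_one_le_left (norm_nonneg _) (Real.one_le_rpow (by simp) hγ)

lemma norm_tsum_mul_le_of_norm_le_mul_weight {ι E : Type*} [NormedAddCommGroup E] [NormedSpace ℂ E]
    [CompleteSpace E] {a : ι → ℂ} {g : ι → E} {w : ι → ℝ} {K : ℝ}
    (hg : Summable fun i => w i * ‖g i‖) (ha : ∀ i, ‖a i‖ ≤ K * w i) :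
    ‖∑' i, a i • g i‖ ≤ K * ∑' i, w i * ‖g i‖ :=
  tsum_of_norm_bounded (hg.hasSum.mul_left K) fun i => by
    rw [norm_smul, ← mul_assoc]
    exact mul_le_mul_of_nonneg_right (ha i) (norm_nonneg _)

lemma sum_mul_sub_tsum_eq_tsum_ite {ι R : Type*} [Ring R] [TopologicalSpace R]
    [IsTopologicalAddGroup R] [T2Space R] {f c : ι → R} (hf : Summable f) (s : Finset ι)
    [DecidablePred (· ∈ s)] :
    ∑ i ∈ s, c i * f i - ∑' i, f i = ∑' i, ((if i ∈ s then c i else 0) - 1) * f i := by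
  have hsum_eq_tsum : ∑ i ∈ s, c i * f i = ∑' i, (if i ∈ s then c i else 0) * f i := by
    rw [tsum_eq_sum (s := s) fun i hi => by simp [hi]]
    exact Finset.sum_congr rfl fun i hi => by simp [hi]
  have hsummable : Summable fun i => (if i ∈ s then c i else 0) * f i :=
    summable_of_ne_finset_zero (s := s) fun i hi => by simp [hi]
  rw [hsum_eq_tsum, ← hsummable.tsum_sub hf]
  exact tsum_congr fun i => by rw [sub_mul, one_mul]

lemma le_rpow_mul_one_add_rpow_of_one_add_le {x L : ℝ} (γ : ℝ) (hx : 0 ≤ x) (hxL : 1 + x ≤ L) :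
    x ≤ L ^ max (1 - γ) 0 * (1 + x) ^ γ := by
  have hone : 1 ≤ 1 + x := by linarith
  have hexp : 1 ≤ max (1 - γ) 0 + γ := by
    have := le_max_left (1 - γ) 0
    linarith
  calc x ≤ (1 + x) ^ (1 : ℝ) := by rw [Real.rpow_one]; linarith
    _ ≤ (1 + x) ^ (max (1 - γ) 0 + γ) := Real.rpow_le_rpow_of_exponent_le hone hexp
    _ = (1 + x) ^ max (1 - γ) 0 * (1 + x) ^ γ := Real.rpow_add (by linarith) _ _
    _ ≤ L ^ max (1 - γ) 0 * (1 + x) ^ γ := by gcongr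

/-- The weight of lag `l` in the expectation of the rectangular lag-window estimator. -/
noncomputable def lagWindow (L N : ℕ) (l : ℤ) : ℝ :=
  if |l| < L then 1 - |(l : ℝ)| / N else 0

lemma abs_lagWindow_sub_one_le {γ : ℝ} (hγ : 0 ≤ γ) {L : ℕ} (hL : 1 ≤ L) (N : ℕ) (l : ℤ) :
    |lagWindow L N l - 1| ≤
      (1 / (L : ℝ) ^ γ + (L : ℝ) ^ max (1 - γ) 0 / N) * (1 + |(l : ℝ)|) ^ γ := by
  have hL₀ : (0 : ℝ) < L := by exact_mod_cast hL
  unfold lagWindow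
  split_ifs with hl
  · have hlL : 1 + |(l : ℝ)| ≤ L := by
      rw [← Int.cast_abs]
      exact_mod_cast (by omega : 1 + |l| ≤ (L : ℤ))
    rw [show 1 - |(l : ℝ)| / N - 1 = -(|(l : ℝ)| / N) by ring, abs_neg, abs_of_nonneg (by positivity)]
    calc |(l : ℝ)| / N ≤ (L : ℝ) ^ max (1 - γ) 0 * (1 + |(l : ℝ)|) ^ γ / N := by
          gcongr
          exact le_rpow_mul_one_add_rpow_of_one_add_le γ (abs_nonneg _) hlL
      _ ≤ _ := by
          rw [add_mul, mul_div_right_comm]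
          exact le_add_of_nonneg_left (by positivity)
  · have hLl : (L : ℝ) ≤ 1 + |(l : ℝ)| := by
      rw [← Int.cast_abs]
      exact_mod_cast (by omega : (L : ℤ) ≤ 1 + |l|)
    rw [zero_sub, abs_neg, abs_one]
    calc (1 : ℝ) ≤ 1 / (L : ℝ) ^ γ * (1 + |(l : ℝ)|) ^ γ := by
          rw [one_div_mul_eq_div, one_le_div (by positivity)]
          exact Real.rpow_le_rpow hL₀.le hLl hγ
      _ ≤ _ := by
          rw [add_mul]
          exact le_add_of_nonneg_right (by positivity)

lemma norm_exp_neg_two_pi_I_mul (l : ℤ) (ν : ℝ) :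
    ‖exp (-(2 * (Real.pi : ℂ) * I * (l : ℂ) * (ν : ℂ)))‖ = 1 := by
  rw [norm_exp]
  simp

/-- uniform bound on the bias of the expected lag-window spectral
estimator with rectangular window of width `L` built from `N` samples. -/
theorem lag_window_bias_bound (γ₀ C : ℝ) (hγ₀ : 0 < γ₀) (hC : 0 < C) :
    ∃ κ : ℝ, 0 < κ ∧
      ∀ r : ℤ → ℂ,
        Summable (fun n : ℤ => (1 + |(n : ℝ)|) ^ γ₀ * norm (r n)) →
        (∑' n : ℤ, (1 + |(n : ℝ)|) ^ γ₀ * norm (r n)) ≤ C →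
        ∀ L N : ℕ, 1 ≤ L → 1 ≤ N → ∀ ν ∈ Set.Icc (0 : ℝ) 1,
          norm
            ((∑ l ∈ Finset.Icc (-(L : ℤ) + 1) ((L : ℤ) - 1),
                (Complex.ofReal (1 - |(l : ℝ)| / (N : ℝ))) * r l *
                  Complex.exp (-(2 * (Real.pi : ℂ) * Complex.I * (l : ℂ) * (ν : ℂ)))) -
              ∑' l : ℤ, r l *
                Complex.exp (-(2 * (Real.pi : ℂ) * Complex.I * (l : ℂ) * (ν : ℂ))))
            ≤ κ * (1 / (L : ℝ) ^ γ₀ + (L : ℝ) ^ (max (1 - γ₀) 0) / (N : ℝ)) := by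
  refine ⟨C, hC, fun r hsum hle L N hL _ ν _ => ?_⟩
  obtain ⟨e, he⟩ : ∃ e : ℤ → ℂ, ∀ l : ℤ, exp (-(2 * (Real.pi : ℂ) * I * (l : ℂ) * (ν : ℂ))) = e l :=
    ⟨_, fun _ => rfl⟩
  set K := 1 / (L : ℝ) ^ γ₀ + (L : ℝ) ^ max (1 - γ₀) 0 / N
  have hnorm : ∀ l, ‖r l * e l‖ = ‖r l‖ := fun l => by
    rw [norm_mul, ← he, norm_exp_neg_two_pi_I_mul, mul_one]
  have hf : Summable fun l => r l * e l :=
    (summable_norm_of_summable_one_add_abs_rpow_mul_norm hγ₀.le hsum).of_norm_bounded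
      fun l => (hnorm l).le
  have hwindow : ∀ l : ℤ, (if l ∈ Finset.Icc (-(L : ℤ) + 1) (L - 1)
      then ((1 - |(l : ℝ)| / N : ℝ) : ℂ) else 0) = lagWindow L N l := by
    intro l
    have hmem : l ∈ Finset.Icc (-(L : ℤ) + 1) (L - 1) ↔ |l| < L := by
      rw [Finset.mem_Icc, abs_lt]; omega
    simp only [lagWindow, hmem]
    split_ifs <;> simp
  simp_rw [he, mul_assoc, sum_mul_sub_tsum_eq_tsum_ite hf, hwindow, ← ofReal_one, ← ofReal_sub]
  calc _ ≤ K * ∑' l : ℤ, (1 + |(l : ℝ)|) ^ γ₀ * ‖r l * e l‖ :=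
        norm_tsum_mul_le_of_norm_le_mul_weight (by simpa only [hnorm] using hsum)
          fun l => by rw [norm_real, Real.norm_eq_abs]; exact abs_lagWindow_sub_one_le hγ₀.le hL N l
    _ ≤ K * C := by simp only [hnorm]; gcongr
    _ = C * K := mul_comm _ _
end

section
/- Let p, q, n ≥ 1 and let U : [0,1] → ℂ^{p×n} and V : [0,1] → ℂ^{q×n} be measurable functions such that the matrix-valued functions U U^H, U V^H and V V^H are Bochner integrable on [0,1]. Suppose the q×q matrix ∫_0^1 V(ν) V(ν)^H dν is invertible. Then, in the Loewner order on Hermitian p×p matrices, ( ∫_0^1 U(ν) V(ν)^H dν ) ( ∫_0^1 V(ν) V(ν)^H dν )^{−1} ( ∫_0^1 U(ν) V(ν)^H dν )^H ≤ ∫_0^1 U(ν) U(ν)^H dν. -/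
/-!
The Gram matrix `∫ [U; V] [U; V]ᴴ` is positive semidefinite, being an integral of positive
semidefinite matrices, and its blocks are `∫ U Uᴴ`, `∫ U Vᴴ`, its adjoint and `∫ V Vᴴ`. The last
block is positive semidefinite and invertible, hence positive definite, so the Schur complement
`∫ U Uᴴ - (∫ U Vᴴ) (∫ V Vᴴ)⁻¹ (∫ U Vᴴ)ᴴ` is positive semidefinite.
-/

open MeasureTheory Matrix
open scoped ComplexOrder

/-- Entrywise (Bochner) integral over `[0,1]` of a matrix-valued function. -/
noncomputable def mInt {m n : ℕ} (f : ℝ → Matrix (Fin m) (Fin n) ℂ) :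
    Matrix (Fin m) (Fin n) ℂ :=
  Matrix.of fun i j => ∫ ν in Set.Icc (0 : ℝ) 1, f ν i j

theorem MeasureTheory.Integrable.star {α E : Type*} [MeasurableSpace α] {μ : Measure α}
    [NormedAddCommGroup E] [StarAddMonoid E] [NormedStarGroup E] {f : α → E}
    (hf : Integrable f μ) : Integrable (fun x => star (f x)) μ :=
  hf.mono hf.aestronglyMeasurable.star (ae_of_all _ fun x => (norm_star (f x)).le)

namespace Matrix

variable {α 𝕜 l m n : Type*} [MeasurableSpace α] {μ : Measure α} [RCLike 𝕜]

noncomputable def integralEntrywise (f : α → Matrix m n 𝕜) (μ : Measure α) : Matrix m n 𝕜 :=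
  of fun i j => ∫ x, f x i j ∂μ

theorem conjTranspose_integralEntrywise (f : α → Matrix m n 𝕜) :
    (integralEntrywise f μ)ᴴ = integralEntrywise (fun x => (f x)ᴴ) μ := by
  ext i j
  exact integral_conj.symm

theorem integralEntrywise_fromBlocks {m₁ m₂ n₁ n₂ : Type*} (A : α → Matrix m₁ n₁ 𝕜)
    (B : α → Matrix m₁ n₂ 𝕜) (C : α → Matrix m₂ n₁ 𝕜) (D : α → Matrix m₂ n₂ 𝕜) :
    integralEntrywise (fun x => fromBlocks (A x) (B x) (C x) (D x)) μ =
      fromBlocks (integralEntrywise A μ) (integralEntrywise B μ) (integralEntrywise C μ)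
        (integralEntrywise D μ) := by
  ext (i | i) (j | j) <;> rfl

theorem dotProduct_integralEntrywise_mulVec [Fintype m] [Fintype n] {f : α → Matrix m n 𝕜}
    (hf : ∀ i j, Integrable (fun x => f x i j) μ) (v : m → 𝕜) (w : n → 𝕜) :
    v ⬝ᵥ integralEntrywise f μ *ᵥ w = ∫ x, v ⬝ᵥ f x *ᵥ w ∂μ := by
  simp only [dotProduct, mulVec, integralEntrywise, of_apply, Finset.mul_sum]
  rw [integral_finsetSum _ fun i _ => integrable_finsetSum _ fun j _ =>
    ((hf i j).mul_const _).const_mul _]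
  refine Finset.sum_congr rfl fun i _ => ?_
  rw [integral_finsetSum _ fun j _ => ((hf i j).mul_const _).const_mul _]
  simp only [integral_const_mul, integral_mul_const]

theorem posSemidef_integralEntrywise [Fintype m] {f : α → Matrix m m 𝕜}
    (hf : ∀ i j, Integrable (fun x => f x i j) μ) (hpos : ∀ᵐ x ∂μ, (f x).PosSemidef) :
    (integralEntrywise f μ).PosSemidef := by
  refine posSemidef_iff_dotProduct_mulVec.mpr ⟨?_, fun v => ?_⟩
  · rw [IsHermitian, conjTranspose_integralEntrywise]
    ext i j
    exact integral_congr_ae (hpos.mono fun x hx => congrFun (congrFun hx.1 i) j)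
  · rw [dotProduct_integralEntrywise_mulVec hf]
    exact integral_nonneg_of_ae (hpos.mono fun x hx => hx.dotProduct_mulVec_nonneg v)

theorem posSemidef_integralEntrywise_mul_conjTranspose [Fintype m] [Fintype n]
    {W : α → Matrix m n 𝕜} (hW : ∀ i j, Integrable (fun x => (W x * (W x)ᴴ) i j) μ) :
    (integralEntrywise (fun x => W x * (W x)ᴴ) μ).PosSemidef :=
  posSemidef_integralEntrywise hW (ae_of_all _ fun x => posSemidef_self_mul_conjTranspose (W x))

theorem posSemidef_integralEntrywise_sub_mul_inv_mul_conjTranspose [Fintype l] [Fintype m]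
    [Fintype n] [DecidableEq n] {U : α → Matrix m l 𝕜} {V : α → Matrix n l 𝕜}
    (hUU : ∀ i j, Integrable (fun x => (U x * (U x)ᴴ) i j) μ)
    (hUV : ∀ i j, Integrable (fun x => (U x * (V x)ᴴ) i j) μ)
    (hVV : ∀ i j, Integrable (fun x => (V x * (V x)ᴴ) i j) μ)
    (hinv : IsUnit (integralEntrywise (fun x => V x * (V x)ᴴ) μ)) :
    (integralEntrywise (fun x => U x * (U x)ᴴ) μ -
        integralEntrywise (fun x => U x * (V x)ᴴ) μ *
          (integralEntrywise (fun x => V x * (V x)ᴴ) μ)⁻¹ *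
          (integralEntrywise (fun x => U x * (V x)ᴴ) μ)ᴴ).PosSemidef := by
  set A := integralEntrywise (fun x => U x * (U x)ᴴ) μ
  set B := integralEntrywise (fun x => U x * (V x)ᴴ) μ
  set C := integralEntrywise (fun x => V x * (V x)ᴴ) μ
  have hVU : ∀ i j, Integrable (fun x => (V x * (U x)ᴴ) i j) μ := fun i j => by
    simpa only [← conjTranspose_apply, conjTranspose_mul, conjTranspose_conjTranspose] using
      (hUV j i).star
  have hBH : integralEntrywise (fun x => V x * (U x)ᴴ) μ = Bᴴ := by
    simp only [B, conjTranspose_integralEntrywise, conjTranspose_mul, conjTranspose_conjTranspose]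
  have hgram : integralEntrywise (fun x => fromRows (U x) (V x) * (fromRows (U x) (V x))ᴴ) μ =
      fromBlocks A B Bᴴ C := by
    simp only [conjTranspose_fromRows_eq_fromCols_conjTranspose, fromRows_mul_fromCols,
      integralEntrywise_fromBlocks, hBH, A, B, C]
  have hgram_psd : (fromBlocks A B Bᴴ C).PosSemidef := by
    rw [← hgram]
    refine posSemidef_integralEntrywise_mul_conjTranspose ?_
    simp only [conjTranspose_fromRows_eq_fromCols_conjTranspose, fromRows_mul_fromCols]
    rintro (i | i) (j | j)
    exacts [hUU i j, hUV i j, hVU i j, hVV i j]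
  have hC : C.PosDef :=
    (posSemidef_integralEntrywise_mul_conjTranspose hVV).posDef_iff_isUnit.mpr hinv
  have := hinv.invertible
  exact (hC.fromBlocks₂₂ A B).mp hgram_psd

end Matrix

theorem matrix_cauchy_schwarz_integral_general (p q n : ℕ)
    (U : ℝ → Matrix (Fin p) (Fin n) ℂ) (V : ℝ → Matrix (Fin q) (Fin n) ℂ)
    (hUU : ∀ i j, IntegrableOn (fun ν => (U ν * (U ν)ᴴ) i j) (Set.Icc (0 : ℝ) 1))
    (hUV : ∀ i j, IntegrableOn (fun ν => (U ν * (V ν)ᴴ) i j) (Set.Icc (0 : ℝ) 1))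
    (hVV : ∀ i j, IntegrableOn (fun ν => (V ν * (V ν)ᴴ) i j) (Set.Icc (0 : ℝ) 1))
    (hinv : IsUnit (mInt fun ν => V ν * (V ν)ᴴ)) :
    (mInt (fun ν => U ν * (U ν)ᴴ) -
        mInt (fun ν => U ν * (V ν)ᴴ) * (mInt fun ν => V ν * (V ν)ᴴ)⁻¹ *
          (mInt (fun ν => U ν * (V ν)ᴴ))ᴴ).PosSemidef :=
  -- `mInt f` unfolds to `integralEntrywise f (volume.restrict (Set.Icc 0 1))`.
  posSemidef_integralEntrywise_sub_mul_inv_mul_conjTranspose hUU hUV hVV hinv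

/-- matrix Cauchy–Schwarz inequality for integrals, in the
Loewner order. -/
theorem matrix_cauchy_schwarz_integral (p q n : ℕ) (hp : 1 ≤ p) (hq : 1 ≤ q) (hn : 1 ≤ n)
    (U : ℝ → Matrix (Fin p) (Fin n) ℂ) (V : ℝ → Matrix (Fin q) (Fin n) ℂ)
    (hUmeas : ∀ i j, Measurable fun ν => U ν i j)
    (hVmeas : ∀ i j, Measurable fun ν => V ν i j)
    (hUU : ∀ i j, IntegrableOn (fun ν => (U ν * (U ν)ᴴ) i j) (Set.Icc (0 : ℝ) 1))
    (hUV : ∀ i j, IntegrableOn (fun ν => (U ν * (V ν)ᴴ) i j) (Set.Icc (0 : ℝ) 1))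
    (hVV : ∀ i j, IntegrableOn (fun ν => (V ν * (V ν)ᴴ) i j) (Set.Icc (0 : ℝ) 1))
    (hinv : IsUnit (mInt fun ν => V ν * (V ν)ᴴ)) :
    (mInt (fun ν => U ν * (U ν)ᴴ) -
        mInt (fun ν => U ν * (V ν)ᴴ) * (mInt fun ν => V ν * (V ν)ᴴ)⁻¹ *
          (mInt (fun ν => U ν * (V ν)ᴴ))ᴴ).PosSemidef :=
  matrix_cauchy_schwarz_integral_general p q n U V hUU hUV hVV hinv
end

section
/- Let L ≥ 1 and let R be an L×L Hermitian positive definite complex matrix with positive square root R^{1/2}. Then for every L×L complex matrix A there exists a unique L×L complex matrix X satisfying R X R^{1/2} + R^{1/2} X R = A; write X = D_R(A). Moreover, for all L×L matrices A and B one has Tr( D_R(A) · B ) = Tr( A · D_R(B) ). -/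
/-! In an eigenbasis of `R` (which is also one of `R^{1/2}`), the equation
`R X R^{1/2} + R^{1/2} X R = A` decouples into the scalar equations
`(λ_i √λ_j + √λ_i λ_j) X_ij = A_ij`, whose coefficients are positive. The trace identity only
uses cyclicity of the trace. -/

open Matrix
open scoped ComplexOrder

noncomputable def Matrix.PosSemidef.sqrt {n : Type*} [Fintype n] [DecidableEq n] {𝕜 : Type*}
    [RCLike 𝕜] {A : Matrix n n 𝕜} (hA : A.PosSemidef) : Matrix n n 𝕜 :=
  hA.1.eigenvectorUnitary.1 * diagonal ((↑) ∘ (√·) ∘ hA.1.eigenvalues) *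
    (star hA.1.eigenvectorUnitary : Matrix n n 𝕜)

theorem Matrix.existsUnique_diagonal_mul_mul_diagonal_add {n 𝕜 : Type*} [Fintype n]
    [DecidableEq n] [Field 𝕜] {d e : n → 𝕜} (h : ∀ i j, d i * e j + e i * d j ≠ 0)
    (B : Matrix n n 𝕜) :
    ∃! X, diagonal d * X * diagonal e + diagonal e * X * diagonal d = B := by
  have key : ∀ X : Matrix n n 𝕜, diagonal d * X * diagonal e + diagonal e * X * diagonal d = B ↔
      X = of fun i j ↦ B i j / (d i * e j + e i * d j) := by
    intro X
    rw [← Matrix.ext_iff, ← Matrix.ext_iff]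
    refine forall₂_congr fun i j ↦ ?_
    rw [of_apply, eq_div_iff (h i j)]
    simp only [Matrix.add_apply, mul_diagonal, diagonal_mul]
    exact Eq.congr_left (by ring)
  simp only [key, existsUnique_eq]

theorem RingEquivClass.existsUnique_map_mul_mul_add {F A : Type*} [Ring A] [EquivLike F A A]
    [RingEquivClass F A A] (φ : F) {P Q : A}
    (h : ∀ B, ∃! X, P * X * Q + Q * X * P = B) (B : A) :
    ∃! X, φ P * X * φ Q + φ Q * X * φ P = B := by
  refine ((φ : A ≃ A).existsUnique_congr (p := fun X ↦ P * X * Q + Q * X * P = (φ : A ≃ A).symm B)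
    fun X ↦ ?_).mp (h _)
  rw [Equiv.eq_symm_apply, EquivLike.coe_coe, map_add, map_mul, map_mul, map_mul, map_mul]

theorem Matrix.trace_mul_mul_mul_add_symm {n α : Type*} [Fintype n] [CommRing α]
    (P Q X Y : Matrix n n α) :
    (X * (P * Y * Q + Q * Y * P)).trace = ((P * X * Q + Q * X * P) * Y).trace := by
  have cycle : ∀ P Q : Matrix n n α, (X * (P * Y * Q)).trace = (Q * X * P * Y).trace := by
    intro P Q
    rw [← Matrix.mul_assoc, ← Matrix.mul_assoc, trace_mul_comm]
    simp only [Matrix.mul_assoc]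
  rw [Matrix.mul_add, Matrix.add_mul, trace_add, trace_add, cycle, cycle, add_comm]

theorem Matrix.PosDef.existsUnique_mul_mul_sqrt_add {n 𝕜 : Type*} [Fintype n] [DecidableEq n]
    [RCLike 𝕜] {R : Matrix n n 𝕜} (hR : R.PosDef) (A : Matrix n n 𝕜) :
    ∃! X, R * X * hR.posSemidef.sqrt + hR.posSemidef.sqrt * X * R = A := by
  have hcoeff : ∀ i j, ((hR.1.eigenvalues i : ℝ) : 𝕜) * (√(hR.1.eigenvalues j) : ℝ) +
      (√(hR.1.eigenvalues i) : ℝ) * (hR.1.eigenvalues j : ℝ) ≠ 0 := by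
    intro i j
    have := hR.eigenvalues_pos i
    have := hR.eigenvalues_pos j
    norm_cast
    positivity
  have := RingEquivClass.existsUnique_map_mul_mul_add
    (Unitary.conjStarAlgAut 𝕜 _ hR.1.eigenvectorUnitary)
    (existsUnique_diagonal_mul_mul_diagonal_add (d := (↑) ∘ hR.1.eigenvalues)
      (e := (↑) ∘ (√·) ∘ hR.1.eigenvalues) hcoeff) A
  rwa [← hR.1.spectral_theorem] at this

theorem sylvester_sqrt_existsUnique_and_trace_symm_general
    (L : ℕ) (R : Matrix (Fin L) (Fin L) ℂ) (hR : R.PosDef) :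
    (∀ A : Matrix (Fin L) (Fin L) ℂ,
        ∃! X : Matrix (Fin L) (Fin L) ℂ,
          R * X * hR.posSemidef.sqrt + hR.posSemidef.sqrt * X * R = A) ∧
      ∀ A B X Y : Matrix (Fin L) (Fin L) ℂ,
        R * X * hR.posSemidef.sqrt + hR.posSemidef.sqrt * X * R = A →
        R * Y * hR.posSemidef.sqrt + hR.posSemidef.sqrt * Y * R = B →
        (X * B).trace = (A * Y).trace :=
  ⟨hR.existsUnique_mul_mul_sqrt_add, fun _ _ X Y hX hY ↦
    hX ▸ hY ▸ trace_mul_mul_mul_add_symm _ _ X Y⟩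

/-- existence, uniqueness, and trace-symmetry for the operator
`D_R`, i.e. the unique solution `X` of `R X R^{1/2} + R^{1/2} X R = A`. -/
theorem sylvester_sqrt_existsUnique_and_trace_symm
    (L : ℕ) (hL : 1 ≤ L) (R : Matrix (Fin L) (Fin L) ℂ) (hR : R.PosDef) :
    (∀ A : Matrix (Fin L) (Fin L) ℂ,
        ∃! X : Matrix (Fin L) (Fin L) ℂ,
          R * X * hR.posSemidef.sqrt + hR.posSemidef.sqrt * X * R = A) ∧
      ∀ A B X Y : Matrix (Fin L) (Fin L) ℂ,
        R * X * hR.posSemidef.sqrt + hR.posSemidef.sqrt * X * R = A →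
        R * Y * hR.posSemidef.sqrt + hR.posSemidef.sqrt * Y * R = B →
        (X * B).trace = (A * Y).trace :=
  sylvester_sqrt_existsUnique_and_trace_symm_general L R hR
end

section
/- Let L ≥ 1 and let r : ℤ → ℂ with r(−k) = conj(r(k)) be such that the L×L Hermitian Toeplitz matrix R_L with entries (R_L)_{jk} = r(j−k) is positive definite (so that each leading principal block R_l, 1 ≤ l ≤ L, is positive definite). For 0 ≤ l ≤ L−1 set σ_l² = 1 / ( (R_{l+1}^{−1})_{1,1} ) > 0 and u_l = σ_l² (R_{l+1}^{−1})^T e_1 ∈ ℂ^{l+1}, with entries indexed u_l(0), …, u_l(l), where e_1 = (1,0,…,0)^T ∈ ℂ^{l+1}; then u_l(0) = 1. Let A be the L×L upper-triangular matrix with A_{jj} = 1 for all j, A_{ij} = u_{j−1}(j−i) for 1 ≤ i < j ≤ L, and A_{ij} = 0 for i > j. Then R_L^{−1} = A · diag( 1/σ_0², 1/σ_1², …, 1/σ_{L−1}² ) · A^H. -/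
open Matrix
open scoped ComplexOrder

/-- The `n × n` Hermitian Toeplitz matrix with symbol sequence `r`:
`(T r n)_{jk} = r (j − k)`. -/
def Tmat (r : ℤ → ℂ) (n : ℕ) : Matrix (Fin n) (Fin n) ℂ :=
  Matrix.of fun j k => r ((j : ℤ) - (k : ℤ))

/-- `σ_l² = 1 / ((R_{l+1}⁻¹)_{1,1})` (`0`-based: the `(0,0)` entry). -/
noncomputable def sigSq (r : ℤ → ℂ) (l : ℕ) : ℂ :=
  1 / ((Tmat r (l + 1))⁻¹ 0 0)

/-- `u_l = σ_l² (R_{l+1}⁻¹)ᵀ e₁` : the reversed Szegő prediction coefficient vector. -/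
noncomputable def uvec (r : ℤ → ℂ) (l : ℕ) : Fin (l + 1) → ℂ :=
  sigSq r l • ((Tmat r (l + 1))⁻¹)ᵀ.mulVec (Pi.single 0 1)

/-- The `L × L` unit upper-triangular matrix with `A_{ij} = u_j (j − i)` for `i ≤ j`. -/
noncomputable def Amat (r : ℤ → ℂ) (L : ℕ) : Matrix (Fin L) (Fin L) ℂ :=
  Matrix.of fun i j =>
    if h : (i : ℕ) ≤ (j : ℕ) then uvec r (j : ℕ) ⟨(j : ℕ) - (i : ℕ), by omega⟩ else 0

/-! The columns of `A` are the vectors `u_j`, reversed and padded with zeros, and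
`R_{j+1}ᵀ u_j = σ_j² e₁`. Read backwards, this says that `R_L A` is lower triangular with diagonal
`σ_j²`. So `Aᴴ R_L A` is lower triangular (as `Aᴴ` is, with unit diagonal) and Hermitian, hence
equal to `diag(σ_j²)`; inverting, with `A` unimodular, gives the factorization. -/

namespace Matrix

variable {m R : Type*} [LinearOrder m]

theorem IsLowerTriangular.mul_apply_self [Fintype m] [NonUnitalNonAssocSemiring R]
    {M N : Matrix m m R} (hM : M.IsLowerTriangular) (hN : N.IsLowerTriangular) (i : m) :
    (M * N) i i = M i i * N i i := by
  rw [mul_apply]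
  refine Finset.sum_eq_single i (fun k _ hki => ?_) (by simp)
  rcases lt_or_gt_of_ne hki with hlt | hgt
  · rw [hN (OrderDual.toDual_lt_toDual.mpr hlt), mul_zero]
  · rw [hM (OrderDual.toDual_lt_toDual.mpr hgt), zero_mul]

theorem IsUpperTriangular.conjTranspose [AddMonoid R] [StarAddMonoid R] {M : Matrix m m R}
    (hM : M.IsUpperTriangular) : Mᴴ.IsLowerTriangular :=
  fun i j hij => by rw [conjTranspose_apply, hM (OrderDual.toDual_lt_toDual.mp hij), star_zero]

theorem IsHermitian.eq_diagonal_of_isLowerTriangular [DecidableEq m] [AddMonoid R]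
    [StarAddMonoid R] {M : Matrix m m R} (hH : M.IsHermitian) (hL : M.IsLowerTriangular) :
    M = diagonal M.diag := by
  ext i j
  rcases lt_trichotomy i j with hij | rfl | hji
  · rw [hL (OrderDual.toDual_lt_toDual.mpr hij), diagonal_apply_ne _ hij.ne]
  · simp
  · rw [← hH.apply i j, hL (OrderDual.toDual_lt_toDual.mpr hji), star_zero,
      diagonal_apply_ne _ hji.ne']

theorem inv_eq_of_mul_mul_eq {n K : Type*} [Fintype n] [DecidableEq n] [CommRing K]
    {P T Q D : Matrix n n K} (hP : IsUnit P.det) (hQ : IsUnit Q.det) (h : P * T * Q = D) :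
    T⁻¹ = Q * D⁻¹ * P := by
  have hT : T = P⁻¹ * D * Q⁻¹ := by
    rw [← h, mul_assoc P, nonsing_inv_mul_cancel_left _ _ hP, mul_nonsing_inv_cancel_right _ _ hQ]
  rw [hT, mul_inv_rev, mul_inv_rev, nonsing_inv_nonsing_inv _ hQ,
    nonsing_inv_nonsing_inv _ hP, mul_assoc]

end Matrix

section Toeplitz

variable {r : ℤ → ℂ}

theorem Tmat_posDef_of_le {m n : ℕ} (hpd : (Tmat r n).PosDef) (h : m ≤ n) :
    (Tmat r m).PosDef :=
  hpd.submatrix (Fin.castLE_injective h)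

theorem sigSq_pos {l : ℕ} (hpd : (Tmat r (l + 1)).PosDef) : 0 < sigSq r l :=
  one_div_pos.mpr hpd.inv.diag_pos

theorem uvec_zero {l : ℕ} (hpd : (Tmat r (l + 1)).PosDef) : uvec r l 0 = 1 := by
  have hne : (Tmat r (l + 1))⁻¹ 0 0 ≠ 0 := hpd.inv.diag_pos.ne'
  simp [uvec, sigSq, mulVec_single, hne]

theorem Tmat_transpose_mulVec_uvec {l : ℕ} (hpd : (Tmat r (l + 1)).PosDef) :
    (Tmat r (l + 1))ᵀ *ᵥ uvec r l = sigSq r l • Pi.single 0 1 := by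
  rw [uvec, mulVec_smul, mulVec_mulVec, ← transpose_mul,
    nonsing_inv_mul _ ((isUnit_iff_isUnit_det _).1 hpd.isUnit), transpose_one, one_mulVec]

theorem Tmat_mul_Amat_apply_of_le {L : ℕ} (p j : Fin L) (hpj : (p : ℕ) ≤ j) :
    (Tmat r L * Amat r L) p j =
      ((Tmat r (j + 1))ᵀ *ᵥ uvec r j) ⟨(j : ℕ) - p, by omega⟩ := by
  let e : Fin (j + 1) → Fin L := fun b => ⟨j - b, by omega⟩
  have he : Function.Injective e := fun a b hab => by
    simp only [e, Fin.mk.injEq] at hab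
    omega
  symm
  refine Fintype.sum_of_injective e he _ _ (fun q hq => ?_) (fun b => ?_)
  · have hqj : ¬ (q : ℕ) ≤ j := fun hqj => hq ⟨⟨j - q, by omega⟩, Fin.ext (by simp [e]; omega)⟩
    simp only [Amat, of_apply, dif_neg hqj, mul_zero]
  · have hb : (b : ℕ) ≤ j := by omega
    simp only [transpose_apply, Tmat, of_apply, Amat, e, dif_pos (Nat.sub_le _ _)]
    congr 2
    · push_cast [Nat.cast_sub hb, Nat.cast_sub hpj]
      ring
    · ext
      simp only
      omega

theorem Amat_isUpperTriangular (r : ℤ → ℂ) (L : ℕ) : (Amat r L).IsUpperTriangular :=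
  fun _ _ hij => dif_neg (not_le.mpr hij)

theorem Amat_apply_self {L : ℕ} (hpd : (Tmat r L).PosDef) (i : Fin L) : Amat r L i i = 1 := by
  simpa [Amat] using uvec_zero (Tmat_posDef_of_le hpd i.isLt)

theorem det_Amat {L : ℕ} (hpd : (Tmat r L).PosDef) : (Amat r L).det = 1 := by
  rw [det_of_isUpperTriangular (Amat_isUpperTriangular r L)]
  exact Finset.prod_eq_one fun i _ => Amat_apply_self hpd i

theorem Tmat_mul_Amat_isLowerTriangular {L : ℕ} (hpd : (Tmat r L).PosDef) :
    (Tmat r L * Amat r L).IsLowerTriangular := by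
  intro p j hpj
  have hpj : p < j := OrderDual.toDual_lt_toDual.mp hpj
  rw [Tmat_mul_Amat_apply_of_le p j hpj.le,
    Tmat_transpose_mulVec_uvec (Tmat_posDef_of_le hpd j.isLt)]
  have hne : (⟨(j : ℕ) - p, by omega⟩ : Fin (j + 1)) ≠ 0 := Fin.ne_of_val_ne (by simp; omega)
  rw [Pi.smul_apply, Pi.single_eq_of_ne hne, smul_zero]

theorem Tmat_mul_Amat_apply_self {L : ℕ} (hpd : (Tmat r L).PosDef) (j : Fin L) :
    (Tmat r L * Amat r L) j j = sigSq r j := by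
  rw [Tmat_mul_Amat_apply_of_le j j le_rfl,
    Tmat_transpose_mulVec_uvec (Tmat_posDef_of_le hpd j.isLt)]
  simp

theorem conjTranspose_Amat_mul_Tmat_mul_Amat {L : ℕ} (hpd : (Tmat r L).PosDef) :
    (Amat r L)ᴴ * Tmat r L * Amat r L = diagonal fun l : Fin L => sigSq r l := by
  have hAH := (Amat_isUpperTriangular r L).conjTranspose
  have hTA := Tmat_mul_Amat_isLowerTriangular hpd
  have hH := isHermitian_conjTranspose_mul_mul (Amat r L) hpd.1
  rw [mul_assoc] at hH ⊢
  rw [hH.eq_diagonal_of_isLowerTriangular (hAH.mul hTA)]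
  congr 1
  ext j
  rw [diag_apply, hAH.mul_apply_self hTA, conjTranspose_apply, Amat_apply_self hpd,
    Tmat_mul_Amat_apply_self hpd, star_one, one_mul]

end Toeplitz

theorem toeplitz_inverse_cholesky_general (L : ℕ) (r : ℤ → ℂ)
    (hpd : (Tmat r L).PosDef) :
    (∀ l : ℕ, l < L → 0 < (sigSq r l).re ∧ (sigSq r l).im = 0) ∧
    (∀ l : ℕ, l < L → uvec r l 0 = 1) ∧
    (Tmat r L)⁻¹ =
      Amat r L * Matrix.diagonal (fun l : Fin L => 1 / sigSq r (l : ℕ)) * (Amat r L)ᴴ := by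
  refine ⟨fun l hl => ?_, fun l hl => uvec_zero (Tmat_posDef_of_le hpd hl), ?_⟩
  · obtain ⟨hre, him⟩ := Complex.pos_iff.mp (sigSq_pos (Tmat_posDef_of_le hpd hl))
    exact ⟨hre, him.symm⟩
  · have hA : IsUnit (Amat r L).det := by rw [det_Amat hpd]; exact isUnit_one
    have hAH : IsUnit (Amat r L)ᴴ.det := by rw [det_conjTranspose]; exact hA.star
    have hD : (diagonal fun l : Fin L => sigSq r l) *
        diagonal (fun l : Fin L => 1 / sigSq r l) = 1 := by
      rw [diagonal_mul_diagonal, ← diagonal_one]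
      exact congrArg diagonal <| funext fun l =>
        mul_one_div_cancel (sigSq_pos (Tmat_posDef_of_le hpd l.isLt)).ne'
    rw [inv_eq_of_mul_mul_eq hAH hA (conjTranspose_Amat_mul_Tmat_mul_Amat hpd), inv_eq_right_inv hD]

/-- Cholesky-type factorization of the inverse of a positive
definite Hermitian Toeplitz matrix via Szegő prediction polynomials:
`R_L⁻¹ = A · diag(1/σ_0², …, 1/σ_{L−1}²) · Aᴴ`, with `σ_l² > 0` real and `u_l(0) = 1`. -/
theorem toeplitz_inverse_cholesky (L : ℕ) (hL : 1 ≤ L) (r : ℤ → ℂ)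
    (hsym : ∀ k : ℤ, r (-k) = starRingEnd ℂ (r k))
    (hpd : (Tmat r L).PosDef) :
    (∀ l : ℕ, l < L → 0 < (sigSq r l).re ∧ (sigSq r l).im = 0) ∧
    (∀ l : ℕ, l < L → uvec r l 0 = 1) ∧
    (Tmat r L)⁻¹ =
      Amat r L * Matrix.diagonal (fun l : Fin L => 1 / sigSq r (l : ℕ)) * (Amat r L)ᴴ :=
  toeplitz_inverse_cholesky_general L r hpd
end
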